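/- arXiv:2007.14213 — 8 statements merged into one kernel-verified Lean document; each statement's English description precedes it below -/
import Mathlib

section
/- Let f ∈ ℂ[x0,x1,x2,x3,x4] be quasi-homogeneous of degree 18 with respect to the weights (1,2,3,5,9) (family №100, X_18 ⊂ P(1,2,3,5,9)). If f is quasi-smooth, then the coefficient of the monomial x4^2 in f is nonzero and the coefficient of the monomial x2·x3^3 in f is nonzero. -/
/-!
If no monomial of `f` has the form `x_j ^ n` or `x_j ^ n * x_i`, then `f` and all its partial
derivatives vanish at the coordinate vertex `e_j`, so quasi-smoothness fails there. For the
weights `(1,2,3,5,9)` and degree `18`, the only such monomial at `e_4` is `x_4 ^ 2`, and the only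
one at `e_3` is `x_2 * x_3 ^ 3`.
-/

open MvPolynomial

/-- `f` is quasi-homogeneous of degree `d` with respect to the weights `a`:
every monomial occurring in `f` with nonzero coefficient has weighted degree `d`. -/
def IsQuasiHomogeneous (a : Fin 5 → ℕ) (d : ℕ) (f : MvPolynomial (Fin 5) ℂ) : Prop :=
  ∀ m ∈ f.support, ∑ i, a i * m i = d

/-- `f` is quasi-smooth: at every nonzero point of the affine cone `{f = 0} ⊆ ℂ⁵`,
some partial derivative of `f` does not vanish. -/
def IsQuasiSmooth (f : MvPolynomial (Fin 5) ℂ) : Prop :=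
  ∀ x : Fin 5 → ℂ, x ≠ 0 → eval x f = 0 → ∃ i, eval x (pderiv i f) ≠ 0

namespace MvPolynomial

variable {σ R : Type*} [DecidableEq σ] [CommSemiring R]

theorem eval_piSingle_one_eq_zero {f : MvPolynomial σ R} {j : σ}
    (h : ∀ n, coeff (Finsupp.single j n) f = 0) : eval (Pi.single j 1) f = 0 := by
  rw [eval_eq]
  refine Finset.sum_eq_zero fun d hd => ?_
  obtain ⟨k, hkj, hdk⟩ : ∃ k ≠ j, d k ≠ 0 := by
    by_contra! hd'
    have hd_eq : d = Finsupp.single j (d j) := by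
      ext k
      by_cases hk : k = j
      · simp [hk]
      · simp [Ne.symm hk, hd' k hk]
    exact mem_support_iff.mp hd (hd_eq ▸ h (d j))
  refine mul_eq_zero_of_right _ (Finset.prod_eq_zero (Finsupp.mem_support_iff.mpr hdk) ?_)
  rw [Pi.single_eq_of_ne hkj, zero_pow hdk]

theorem eval_piSingle_one_pderiv_eq_zero {f : MvPolynomial σ R} {i j : σ}
    (h : ∀ n, coeff (Finsupp.single j n + Finsupp.single i 1) f = 0) :
    eval (Pi.single j 1) (pderiv i f) = 0 :=
  eval_piSingle_one_eq_zero fun n => by rw [coeff_pderiv, h, zero_mul]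

end MvPolynomial

theorem IsQuasiSmooth.exists_coeff_ne_zero_at_vertex {f : MvPolynomial (Fin 5) ℂ}
    (hf : IsQuasiSmooth f) (j : Fin 5) :
    (∃ n, coeff (Finsupp.single j n) f ≠ 0) ∨
      ∃ i n, coeff (Finsupp.single j n + Finsupp.single i 1) f ≠ 0 := by
  by_contra! h
  obtain ⟨i, hi⟩ := hf (Pi.single j 1) (by simp) (eval_piSingle_one_eq_zero h.1)
  exact hi (eval_piSingle_one_pderiv_eq_zero (h.2 i))

theorem IsQuasiHomogeneous.weight_single {a : Fin 5 → ℕ} {d : ℕ} {f : MvPolynomial (Fin 5) ℂ}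
    (hf : IsQuasiHomogeneous a d f) {j : Fin 5} {n : ℕ}
    (hc : coeff (Finsupp.single j n) f ≠ 0) : a j * n = d := by
  simpa [Finsupp.single_apply] using hf _ (mem_support_iff.mpr hc)

theorem IsQuasiHomogeneous.weight_single_add_single {a : Fin 5 → ℕ} {d : ℕ}
    {f : MvPolynomial (Fin 5) ℂ} (hf : IsQuasiHomogeneous a d f) {i j : Fin 5} {n : ℕ}
    (hc : coeff (Finsupp.single j n + Finsupp.single i 1) f ≠ 0) : a j * n + a i = d := by
  simpa [Finsupp.single_apply, mul_add, Finset.sum_add_distrib] using hf _ (mem_support_iff.mpr hc)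

theorem stmt_0 (f : MvPolynomial (Fin 5) ℂ)
    (hqh : IsQuasiHomogeneous ![1,2,3,5,9] 18 f)
    (hqs : IsQuasiSmooth f) :
    f.coeff (Finsupp.single (4 : Fin 5) 2) ≠ 0 ∧ f.coeff (Finsupp.single (2 : Fin 5) 1 + Finsupp.single (3 : Fin 5) 3) ≠ 0 := by
  constructor
  · rcases hqs.exists_coeff_ne_zero_at_vertex 4 with ⟨n, hc⟩ | ⟨i, n, hc⟩
    · have hdeg := hqh.weight_single hc
      simp only [Fin.isValue, Matrix.cons_val] at hdeg
      obtain rfl : n = 2 := by omega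
      exact hc
    · have hdeg := hqh.weight_single_add_single hc
      obtain ⟨rfl, rfl⟩ : i = 4 ∧ n = 1 := by fin_cases i <;> simp at hdeg ⊢ <;> omega
      simpa [← Finsupp.single_add] using hc
  · rcases hqs.exists_coeff_ne_zero_at_vertex 3 with ⟨n, hc⟩ | ⟨i, n, hc⟩
    · have hdeg := hqh.weight_single hc
      simp only [Fin.isValue, Matrix.cons_val] at hdeg
      omega
    · have hdeg := hqh.weight_single_add_single hc
      obtain ⟨rfl, rfl⟩ : i = 2 ∧ n = 3 := by fin_cases i <;> simp at hdeg ⊢ <;> omega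
      simpa [add_comm] using hc
end

section
/- Let f ∈ ℂ[x0,x1,x2,x3,x4] be quasi-homogeneous of degree 18 with respect to the weights (1,2,3,5,9) (family №100). If f is quasi-smooth, then the coefficient of the monomial x1^9 in f is nonzero. -/
open MvPolynomial

/-- The point `(0,1,0,0,0)` in `ℂ⁵`. -/
noncomputable def xpt : Fin 5 → ℂ := fun j => if j = 1 then 1 else 0

lemma xpt_prod (m : Fin 5 →₀ ℕ) :
    (∏ j, xpt j ^ m j) = if m 0 = 0 ∧ m 2 = 0 ∧ m 3 = 0 ∧ m 4 = 0 then 1 else 0 := by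
  have h : ∀ k : ℕ, (0:ℂ) ^ k = if k = 0 then 1 else 0 := by
    intro k; cases k <;> simp [pow_succ]
  rw [Fin.prod_univ_five]
  simp only [xpt]
  norm_num [h]
  split_ifs <;> simp_all

lemma weight_eq (f : MvPolynomial (Fin 5) ℂ)
    (hqh : ∀ m ∈ f.support, ∑ i, (![1,2,3,5,9] : Fin 5 → ℕ) i * m i = 18)
    (m : Fin 5 →₀ ℕ) (hm : m ∈ f.support) :
    m 0 + 2 * m 1 + 3 * m 2 + 5 * m 3 + 9 * m 4 = 18 := by
  have := hqh m hm
  rw [Fin.sum_univ_five] at this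
  simpa using this

lemma eval_xpt_eq_zero (f : MvPolynomial (Fin 5) ℂ)
    (hqh : ∀ m ∈ f.support, ∑ i, (![1,2,3,5,9] : Fin 5 → ℕ) i * m i = 18)
    (hc : f.coeff (Finsupp.single (1 : Fin 5) 9) = 0) :
    eval xpt f = 0 := by
  rw [eval_eq']
  apply Finset.sum_eq_zero
  intro m hm
  rw [xpt_prod]
  split_ifs with h
  · obtain ⟨h0, h2, h3, h4⟩ := h
    have hw := weight_eq f hqh m hm
    have h1 : m 1 = 9 := by omega
    have : m = Finsupp.single (1 : Fin 5) 9 := by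
      ext j; fin_cases j <;> simp_all [Finsupp.single_apply]
    rw [this, hc, mul_one]
  · rw [mul_zero]

lemma eval_xpt_pderiv_eq_zero (f : MvPolynomial (Fin 5) ℂ)
    (hqh : ∀ m ∈ f.support, ∑ i, (![1,2,3,5,9] : Fin 5 → ℕ) i * m i = 18)
    (hc : f.coeff (Finsupp.single (1 : Fin 5) 9) = 0) (i : Fin 5) :
    eval xpt (pderiv i f) = 0 := by
  conv_lhs => rw [f.as_sum]
  rw [map_sum, map_sum]
  apply Finset.sum_eq_zero
  intro m hm
  rw [pderiv_monomial, eval_monomial, Finsupp.prod_pow, xpt_prod]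
  have hw := weight_eq f hqh m hm
  have hsub : ∀ j : Fin 5, ((m - Finsupp.single i 1 : Fin 5 →₀ ℕ)) j
      = m j - (if i = j then 1 else 0) := by
    intro j; rw [Finsupp.tsub_apply, Finsupp.single_apply]
  rcases Nat.eq_zero_or_pos (m i) with h0 | hpos
  · simp [h0]
  split_ifs with h
  · obtain ⟨h0, h2, h3, h4⟩ := h
    rw [hsub] at h0 h2 h3 h4
    fin_cases i <;> simp_all <;> try omega
    · -- i = 1 case
      have h1 : m 1 = 9 := by omega
      have : m = Finsupp.single (1 : Fin 5) 9 := by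
        ext j; fin_cases j <;> simp_all [Finsupp.single_apply]
      rw [this] at hm
      exact absurd hc hm
  · rw [mul_zero]

theorem stmt_5 (f : MvPolynomial (Fin 5) ℂ)
    (hqh : IsQuasiHomogeneous ![1,2,3,5,9] 18 f)
    (hqs : IsQuasiSmooth f) :
    f.coeff (Finsupp.single (1 : Fin 5) 9) ≠ 0 := by
  intro hc
  have hx : xpt ≠ 0 := by
    intro h
    have := congrFun h 1
    simp [xpt] at this
  obtain ⟨i, hi⟩ := hqs xpt hx (eval_xpt_eq_zero f hqh hc)
  exact hi (eval_xpt_pderiv_eq_zero f hqh hc i)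
end

section
/- Let f ∈ ℂ[x0,x1,x2,x3,x4] be quasi-homogeneous of degree 22 with respect to the weights (1,2,3,7,11) (family №101). If f is quasi-smooth, then the coefficient of the monomial x1^11 in f is nonzero. -/
open MvPolynomial

theorem stmt_6 (f : MvPolynomial (Fin 5) ℂ)
    (hqh : IsQuasiHomogeneous ![1,2,3,7,11] 22 f)
    (hqs : IsQuasiSmooth f) :
    f.coeff (Finsupp.single (1 : Fin 5) 11) ≠ 0 := by
  intro h
  classical
  set x : Fin 5 → ℂ := fun j => if j = 1 then 1 else 0 with hxdef
  have hxne : x ≠ 0 := fun h0 => by simpa [hxdef] using congrFun h0 1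
  have hprod : ∀ m : Fin 5 →₀ ℕ, (∏ j, x j ^ m j) =
      if m 0 = 0 ∧ m 2 = 0 ∧ m 3 = 0 ∧ m 4 = 0 then 1 else 0 := by
    intro m
    by_cases h0 : m 0 = 0 <;> by_cases h2 : m 2 = 0 <;> by_cases h3 : m 3 = 0 <;>
      by_cases h4 : m 4 = 0 <;>
      simp [Fin.prod_univ_five, hxdef, h0, h2, h3, h4, zero_pow, Fin.ext_iff] <;> decide
  have hwt : ∀ m ∈ f.support,
      m 0 + 2 * m 1 + 3 * m 2 + 7 * m 3 + 11 * m 4 = 22 := by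
    intro m hm
    have := hqh m hm
    rw [Fin.sum_univ_five] at this
    simpa [Matrix.cons_val_zero, Matrix.cons_val_one] using this
  have hsingle : ∀ m ∈ f.support, m 0 = 0 → m 2 = 0 → m 3 = 0 → m 4 = 0 →
      m = Finsupp.single (1 : Fin 5) 11 := by
    intro m hm h0 h2 h3 h4
    have hw := hwt m hm
    have h1 : m 1 = 11 := by omega
    ext j
    fin_cases j <;> simp [Finsupp.single_apply, h0, h1, h2, h3, h4]
  have heval0 : eval x f = 0 := by
    rw [eval_eq']
    apply Finset.sum_eq_zero
    intro m hm
    rw [hprod m]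
    split
    · next hc =>
      obtain ⟨h0, h2, h3, h4⟩ := hc
      rw [hsingle m hm h0 h2 h3 h4, h, zero_mul]
    · rw [mul_zero]
  obtain ⟨i, hi⟩ := hqs x hxne heval0
  apply hi
  conv_lhs => rw [f.as_sum]
  rw [map_sum, map_sum]
  apply Finset.sum_eq_zero
  intro m hm
  rw [pderiv_monomial, eval_monomial, Finsupp.prod_pow, hprod]
  have hsub : ∀ j : Fin 5, ((m - Finsupp.single i 1 : Fin 5 →₀ ℕ) : Fin 5 → ℕ) j
      = m j - (Finsupp.single i 1 : Fin 5 →₀ ℕ) j := fun j => Finsupp.tsub_apply m _ j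
  split
  · next hc =>
    obtain ⟨h0, h2, h3, h4⟩ := hc
    simp only [hsub] at h0 h2 h3 h4
    have hw := hwt m hm
    fin_cases i <;>
      simp (config := { decide := true }) [Finsupp.single_apply] at h0 h2 h3 h4
    · -- i = 0 : m 0 - 1 = 0, m2=m3=m4=0
      have : m 0 = 0 := by omega
      simp [this]
    · -- i = 1
      have h1 : m 0 = 0 := by omega
      rw [hsingle m hm h1 h2 h3 h4, h]
      ring
    · have : m 2 = 0 := by omega
      simp [this]
    · have : m 3 = 0 := by omega
      simp [this]
    · have : m 4 = 0 := by omega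
      simp [this]
  · rw [mul_zero]
end

section
/- Let f ∈ ℂ[x0,x1,x2,x3,x4] be quasi-homogeneous of degree 26 with respect to the weights (1,2,5,7,13) (family №102). If f is quasi-smooth, then the coefficient of the monomial x1^13 in f is nonzero. -/
open MvPolynomial

theorem stmt_7 (f : MvPolynomial (Fin 5) ℂ)
    (hqh : IsQuasiHomogeneous ![1,2,5,7,13] 26 f)
    (hqs : IsQuasiSmooth f) :
    f.coeff (Finsupp.single (1 : Fin 5) 13) ≠ 0 := by
  intro h
  set x : Fin 5 → ℂ := fun j => if j = 1 then 1 else 0 with hxdef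
  have hx : x ≠ 0 := by
    intro hx0
    have := congrFun hx0 1
    simp [hxdef] at this
  have hev : ∀ (m : Fin 5 →₀ ℕ) (c : ℂ), (∃ j, j ≠ 1 ∧ m j ≠ 0) →
      eval x (monomial m c) = 0 := by
    rintro m c ⟨j, hj1, hj0⟩
    rw [eval_monomial]
    have : m.prod (fun i e => x i ^ e) = 0 := by
      apply Finset.prod_eq_zero (Finsupp.mem_support_iff.2 hj0)
      simp [hxdef, hj1, hj0]
    rw [this, mul_zero]
  have hweight : ∀ m ∈ f.support, m 0 + 2 * m 1 + 5 * m 2 + 7 * m 3 + 13 * m 4 = 26 := by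
    intro m hm
    have := hqh m hm
    simpa [Fin.sum_univ_five] using this
  have hf0 : eval x f = 0 := by
    conv_lhs => rw [f.as_sum]
    rw [map_sum]
    apply Finset.sum_eq_zero
    intro m hm
    by_cases hj : ∃ j, j ≠ 1 ∧ m j ≠ 0
    · exact hev m _ hj
    · push_neg at hj
      have hw := hweight m hm
      have h0 := hj 0 (by decide)
      have h2 := hj 2 (by decide)
      have h3 := hj 3 (by decide)
      have h4 := hj 4 (by decide)
      have hm1 : m = Finsupp.single 1 13 := by
        ext j
        fin_cases j <;> simp [Finsupp.single_apply, h0, h2, h3, h4] <;> omega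
      rw [hm1, h]
      simp
  obtain ⟨i, hi⟩ := hqs x hx hf0
  apply hi
  conv_lhs => rw [f.as_sum]
  rw [map_sum, map_sum]
  apply Finset.sum_eq_zero
  intro m hm
  rw [pderiv_monomial]
  by_cases hmi : m i = 0
  · simp [hmi]
  by_cases hj : ∃ j, j ≠ 1 ∧ ((m - Finsupp.single i 1 : Fin 5 →₀ ℕ) j) ≠ 0
  · exact hev _ _ hj
  push_neg at hj
  have hw := hweight m hm
  have hsub : ∀ j, ((m - Finsupp.single i 1 : Fin 5 →₀ ℕ) j) = m j - Finsupp.single i 1 j :=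
    fun j => Finsupp.tsub_apply _ _ _
  have h0 := hj 0 (by decide); have h2 := hj 2 (by decide)
  have h3 := hj 3 (by decide); have h4 := hj 4 (by decide)
  rw [hsub] at h0 h2 h3 h4
  fin_cases i
  · exfalso
    simp [Finsupp.single_apply] at h0 h2 h3 h4 hmi
    omega
  · simp only [Finsupp.single_apply] at h0 h2 h3 h4
    simp at h0 h2 h3 h4
    have hm1 : m = Finsupp.single 1 13 := by
      ext j
      fin_cases j <;> simp [Finsupp.single_apply, h0, h2, h3, h4] <;> omega
    rw [hm1, h]
    simp
  · exfalso
    simp [Finsupp.single_apply] at h0 h2 h3 h4 hmi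
    omega
  · exfalso
    simp [Finsupp.single_apply] at h0 h2 h3 h4 hmi
    omega
  · exfalso
    simp [Finsupp.single_apply] at h0 h2 h3 h4 hmi
    omega
end

section
/- Let f ∈ ℂ[x0,x1,x2,x3,x4] be quasi-homogeneous of degree 38 with respect to the weights (2,3,5,11,19) (family №103). If f is quasi-smooth, then the coefficient of the monomial x0^19 in f is nonzero. -/
open MvPolynomial

theorem stmt_8 (f : MvPolynomial (Fin 5) ℂ)
    (hqh : IsQuasiHomogeneous ![2,3,5,11,19] 38 f)
    (hqs : IsQuasiSmooth f) :
    f.coeff (Finsupp.single (0 : Fin 5) 19) ≠ 0 := by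
  intro hc
  set x : Fin 5 → ℂ := fun j => if j = 0 then 1 else 0 with hxdef
  have hx0 : x ≠ 0 := by
    intro h
    have := congrFun h 0
    simp [hxdef] at this
  have hprod : ∀ n : Fin 5 →₀ ℕ, (∏ j, x j ^ n j)
      = if n 1 = 0 ∧ n 2 = 0 ∧ n 3 = 0 ∧ n 4 = 0 then 1 else 0 := by
    intro n
    rw [Fin.prod_univ_five]
    by_cases h1 : n 1 = 0 <;> by_cases h2 : n 2 = 0 <;> by_cases h3 : n 3 = 0 <;>
      by_cases h4 : n 4 = 0 <;> simp [hxdef, h1, h2, h3, h4, zero_pow]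
  -- weight computation
  have hw : ∀ m ∈ f.support, 2 * m 0 + 3 * m 1 + 5 * m 2 + 11 * m 3 + 19 * m 4 = 38 := by
    intro m hm
    have := hqh m hm
    rw [Fin.sum_univ_five] at this
    simpa [Matrix.cons_val_zero, Matrix.cons_val_one] using this
  -- key: monomials in support with only x0 must be x0^19
  have hkey : ∀ m ∈ f.support, m 1 = 0 ∧ m 2 = 0 ∧ m 3 = 0 ∧ m 4 = 0 →
      m = Finsupp.single (0 : Fin 5) 19 := by
    intro m hm ⟨h1, h2, h3, h4⟩
    have hw' := hw m hm
    rw [h1, h2, h3, h4] at hw'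
    have h0 : m 0 = 19 := by omega
    ext j
    fin_cases j <;> simp [h0, h1, h2, h3, h4, Finsupp.single_apply]
  have hfull : ∀ n : Fin 5 →₀ ℕ, (∏ j ∈ n.support, x j ^ n j) = ∏ j, x j ^ n j :=
    fun n => Finset.prod_subset (Finset.subset_univ _)
      (fun j _ hj => by simp [Finsupp.notMem_support_iff.mp hj])
  have hf0 : eval x f = 0 := by
    rw [eval_eq]
    apply Finset.sum_eq_zero
    intro m hm
    rw [hfull m, hprod m]
    split_ifs with h
    · have := hkey m hm h
      rw [this] at hm
      simp [Finsupp.mem_support_iff, hc] at hm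
    · ring
  obtain ⟨i, hi⟩ := hqs x hx0 hf0
  apply hi
  -- express pderiv via sum of monomials
  have hrep : pderiv i f = ∑ m ∈ f.support,
      monomial (m - Finsupp.single i 1) (f.coeff m * m i) := by
    conv_lhs => rw [f.as_sum]
    rw [map_sum]
    exact Finset.sum_congr rfl fun m _ => pderiv_monomial
  rw [hrep, map_sum]
  apply Finset.sum_eq_zero
  intro m hm
  rw [eval_monomial]
  rw [Finsupp.prod_fintype _ _ (fun j => pow_zero (x j)), hprod]
  split_ifs with h
  · obtain ⟨h1, h2, h3, h4⟩ := h
    simp only [Finsupp.tsub_apply, Finsupp.single_apply] at h1 h2 h3 h4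
    have hw' := hw m hm
    fin_cases i
    · -- i = 0 : h1..h4 give m1..m4 = 0
      simp at h1 h2 h3 h4
      have := hkey m hm ⟨h1, h2, h3, h4⟩
      rw [this] at hm
      simp [Finsupp.mem_support_iff, hc] at hm
    · -- i = 1 : m 1 ≤ 1, others 0; weight 2 m0 + 3 m1 = 38 with m1 ∈ {0,1}
      simp at h1 h2 h3 h4
      by_cases hz : m 1 = 0
      · simp [hz]
      · exfalso; omega
    · simp at h1 h2 h3 h4
      by_cases hz : m 2 = 0
      · simp [hz]
      · exfalso; omega
    · simp at h1 h2 h3 h4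
      by_cases hz : m 3 = 0
      · simp [hz]
      · exfalso; omega
    · simp at h1 h2 h3 h4
      by_cases hz : m 4 = 0
      · simp [hz]
      · exfalso; omega
  · ring
end

section
/- Let f ∈ ℂ[x0,x1,x2,x3,x4] be quasi-homogeneous of degree 21 with respect to the weights (1,3,5,7,8) (family №110). If f is quasi-smooth, then the coefficient of the monomial x3^3 in f is nonzero, the coefficient of the monomial x1^7 in f is nonzero, and the coefficient of the monomial x0·x2^4 in f is nonzero. -/
open MvPolynomial

/-!
At the coordinate point `e_j`, the values of `f` and of `∂f/∂x_i` are sums of coefficients of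
monomials `x_j^n` and `x_i x_j^n` respectively, so quasi-smoothness at `e_j` forces `f` to contain
a monomial of one of these shapes. For the weights `(1,3,5,7,8)` and degree `21`, the only such
monomials for `j = 3, 1, 2` are `x_3^3`, `x_1^7` and `x_0 x_2^4`.
-/

namespace MvPolynomial

variable {σ R : Type*} [CommSemiring R]

theorem exists_single_mem_support_of_eval_piSingle_ne_zero [Fintype σ] [DecidableEq σ]
    {p : MvPolynomial σ R} {j : σ} (h : eval (Pi.single j 1) p ≠ 0) :
    ∃ n, Finsupp.single j n ∈ p.support := by
  rw [eval_eq'] at h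
  obtain ⟨m, hm, hne⟩ := Finset.exists_ne_zero_of_sum_ne_zero h
  refine ⟨m j, ?_⟩
  convert hm
  ext k
  rcases eq_or_ne k j with rfl | hk
  · simp
  · rw [Finsupp.single_eq_of_ne' hk.symm]
    by_contra hmk
    refine hne (mul_eq_zero_of_right _ (Finset.prod_eq_zero (Finset.mem_univ k) ?_))
    rw [Pi.single_eq_of_ne hk, zero_pow (Ne.symm hmk)]

theorem add_single_mem_support_of_mem_support_pderiv [DecidableEq σ] {p : MvPolynomial σ R}
    {i : σ} {m : σ →₀ ℕ} (h : m ∈ (pderiv i p).support) :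
    m + Finsupp.single i 1 ∈ p.support := by
  rw [mem_support_iff, coeff_pderiv] at h
  exact mem_support_iff.mpr (left_ne_zero_of_mul h)

end MvPolynomial

theorem IsQuasiSmooth.exists_monomial_mem_support {f : MvPolynomial (Fin 5) ℂ}
    (hqs : IsQuasiSmooth f) (j : Fin 5) :
    ∃ m ∈ f.support, ∃ n, m = Finsupp.single j n ∨
      ∃ i, m = Finsupp.single j n + Finsupp.single i 1 := by
  by_contra! h
  have hf : eval (Pi.single j 1) f = 0 := by
    by_contra hne
    obtain ⟨n, hn⟩ := exists_single_mem_support_of_eval_piSingle_ne_zero hne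
    exact (h _ hn n).1 rfl
  obtain ⟨i, hi⟩ := hqs _ (by simp) hf
  obtain ⟨n, hn⟩ := exists_single_mem_support_of_eval_piSingle_ne_zero hi
  exact (h _ (add_single_mem_support_of_mem_support_pderiv hn) n).2 i rfl

theorem IsQuasiSmooth.coeff_ne_zero {f : MvPolynomial (Fin 5) ℂ} (hqs : IsQuasiSmooth f)
    (j : Fin 5) {v : Fin 5 →₀ ℕ}
    (hv : ∀ m ∈ f.support, (∃ n, m = Finsupp.single j n ∨
      ∃ i, m = Finsupp.single j n + Finsupp.single i 1) → m = v) :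
    f.coeff v ≠ 0 := by
  obtain ⟨m, hm, hmj⟩ := hqs.exists_monomial_mem_support j
  exact mem_support_iff.mp (hv m hm hmj ▸ hm)

theorem stmt_9 (f : MvPolynomial (Fin 5) ℂ)
    (hqh : IsQuasiHomogeneous ![1,3,5,7,8] 21 f)
    (hqs : IsQuasiSmooth f) :
    f.coeff (Finsupp.single (3 : Fin 5) 3) ≠ 0 ∧ f.coeff (Finsupp.single (1 : Fin 5) 7) ≠ 0 ∧ f.coeff (Finsupp.single (0 : Fin 5) 1 + Finsupp.single (2 : Fin 5) 4) ≠ 0 := by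
  refine ⟨hqs.coeff_ne_zero 3 ?_, hqs.coeff_ne_zero 1 ?_, hqs.coeff_ne_zero 2 ?_⟩ <;>
  · rintro _ hm ⟨n, rfl | ⟨i, rfl⟩⟩ <;> [skip; fin_cases i] <;>
    · have hw := hqh _ hm
      simp [Fin.sum_univ_five, Finsupp.single_apply] at hw
      ext k
      fin_cases k <;> simp <;> omega
end

section
/- Let f ∈ ℂ[x0,x1,x2,x3,x4] be quasi-homogeneous of degree 26 with respect to the weights (1,2,5,7,13) (family №102). If f is quasi-smooth, then the coefficient of the monomial x0·x2^5 in f is nonzero. -/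
open MvPolynomial

theorem stmt_13 (f : MvPolynomial (Fin 5) ℂ)
    (hqh : IsQuasiHomogeneous ![1,2,5,7,13] 26 f)
    (hqs : IsQuasiSmooth f) :
    f.coeff (Finsupp.single (0 : Fin 5) 1 + Finsupp.single (2 : Fin 5) 5) ≠ 0 := by
  intro hc
  set x : Fin 5 → ℂ := fun j => if j = 2 then 1 else 0 with hx
  have hxne : x ≠ 0 := by
    intro h
    have := congrFun h 2
    simp [hx] at this
  have hweight : ∀ m ∈ f.support, m 0 + 2*m 1 + 5*m 2 + 7*m 3 + 13*m 4 = 26 := by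
    intro m hm
    have := hqh m hm
    simp [Fin.sum_univ_five] at this
    omega
  have heval : eval x f = 0 := by
    rw [eval_eq']
    apply Finset.sum_eq_zero
    intro m hm
    rcases eq_or_ne (∏ i, x i ^ m i) 0 with h | h
    · rw [h, mul_zero]
    · exfalso
      have hzero : ∀ j : Fin 5, j ≠ 2 → m j = 0 := by
        intro j hj
        by_contra hmj
        apply h
        apply Finset.prod_eq_zero (Finset.mem_univ j)
        simp [hx, hj, zero_pow hmj]
      have hw := hweight m hm
      have h0 := hzero 0 (by decide)
      have h1 := hzero 1 (by decide)
      have h3 := hzero 3 (by decide)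
      have h4 := hzero 4 (by decide)
      omega
  obtain ⟨i, hi⟩ := hqs x hxne heval
  apply hi
  conv_lhs => rw [← f.support_sum_monomial_coeff]
  rw [map_sum, map_sum]
  apply Finset.sum_eq_zero
  intro m hm
  rw [pderiv_monomial, eval_monomial]
  rcases eq_or_ne (m i) 0 with hmi | hmi
  · simp [hmi]
  rw [Finsupp.prod_pow]
  set s : Fin 5 →₀ ℕ := m - Finsupp.single i 1 with hs
  rcases eq_or_ne (∏ j, x j ^ s j) 0 with h | h
  · rw [h, mul_zero]
  exfalso
  have hzero : ∀ j : Fin 5, j ≠ 2 → s j = 0 := by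
    intro j hj
    by_contra hmj
    apply h
    apply Finset.prod_eq_zero (Finset.mem_univ j)
    simp [hx, hj, zero_pow hmj]
  have hsub : ∀ j : Fin 5, s j = m j - Finsupp.single i 1 j :=
    fun j => Finsupp.tsub_apply m (Finsupp.single i 1) j
  have hoff : ∀ j : Fin 5, j ≠ 2 → j ≠ i → m j = 0 := by
    intro j hj2 hji
    have h1 := hzero j hj2
    rw [hsub j, Finsupp.single_apply, if_neg (Ne.symm hji)] at h1
    omega
  have hw := hweight m hm
  rcases eq_or_ne i 2 with hi2 | hi2
  · subst hi2
    have h0 := hoff 0 (by decide) (by decide)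
    have h1 := hoff 1 (by decide) (by decide)
    have h3 := hoff 3 (by decide) (by decide)
    have h4 := hoff 4 (by decide) (by decide)
    omega
  · have hione : m i = 1 := by
      have h1 := hzero i hi2
      rw [hsub i, Finsupp.single_apply, if_pos rfl] at h1
      omega
    have hi0 : i = 0 := by
      by_contra hne
      have h0 := hoff 0 (by decide) (Ne.symm hne)
      fin_cases i
      · exact hne rfl
      · have h3 := hoff 3 (by decide) (by decide)
        have h4 := hoff 4 (by decide) (by decide)
        simp_all
        omega
      · exact hi2 rfl
      · have h1 := hoff 1 (by decide) (by decide)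
        have h4 := hoff 4 (by decide) (by decide)
        simp_all
        omega
      · have h1 := hoff 1 (by decide) (by decide)
        have h3 := hoff 3 (by decide) (by decide)
        simp_all
        omega
    subst hi0
    have h1 := hoff 1 (by decide) (by decide)
    have h3 := hoff 3 (by decide) (by decide)
    have h4 := hoff 4 (by decide) (by decide)
    have hm2 : m 2 = 5 := by omega
    have hmeq : m = Finsupp.single (0 : Fin 5) 1 + Finsupp.single (2 : Fin 5) 5 := by
      clear * - h1 h3 h4 hione hm2
      ext j
      fin_cases j <;>
        simp_all [Finsupp.add_apply, Finsupp.single_apply]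
    rw [MvPolynomial.mem_support_iff, hmeq] at hm
    exact hm hc
end

section
/- Let f ∈ ℂ[x0,x1,x2,x3,x4] be quasi-homogeneous of degree 38 with respect to the weights (2,3,5,11,19) (family №103). If f is quasi-smooth, then the coefficient of the monomial x1·x2^7 in f is nonzero. -/
open MvPolynomial

theorem stmt_14 (f : MvPolynomial (Fin 5) ℂ)
    (hqh : IsQuasiHomogeneous ![2,3,5,11,19] 38 f)
    (hqs : IsQuasiSmooth f) :
    f.coeff (Finsupp.single (1 : Fin 5) 1 + Finsupp.single (2 : Fin 5) 7) ≠ 0 := by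
  intro hc
  set p : Fin 5 → ℂ := fun j => if j = 2 then 1 else 0 with hp
  have hp0 : p ≠ 0 := by
    intro h
    have := congrFun h 2
    simp [hp] at this
  have hprod : ∀ (s : Fin 5 →₀ ℕ) (j : Fin 5), j ≠ 2 → s j ≠ 0 →
      (∏ k, p k ^ s k) = 0 := by
    intro s j hj hs
    apply Finset.prod_eq_zero (Finset.mem_univ j)
    simp [hp, hj, zero_pow hs]
  have hsupp : ∀ m ∈ f.support, 2 * m 0 + 3 * m 1 + 5 * m 2 + 11 * m 3 + 19 * m 4 = 38 := by
    intro m hm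
    have := hqh m hm
    simpa [Fin.sum_univ_five] using this
  have hf0 : eval p f = 0 := by
    rw [eval_eq']
    apply Finset.sum_eq_zero
    intro m hm
    rcases Classical.em (∃ j : Fin 5, j ≠ 2 ∧ m j ≠ 0) with ⟨j, hj, hmj⟩ | h
    · rw [hprod m j hj hmj, mul_zero]
    · push_neg at h
      exfalso
      have hw := hsupp m hm
      have h0 := h 0 (by decide); have h1 := h 1 (by decide)
      have h3 := h 3 (by decide); have h4 := h 4 (by decide)
      omega
  obtain ⟨i, hi⟩ := hqs p hp0 hf0
  apply hi
  conv_lhs => rw [f.as_sum]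
  rw [map_sum, map_sum]
  apply Finset.sum_eq_zero
  intro m hm
  rw [pderiv_monomial, eval_monomial, Finsupp.prod_pow]
  by_cases hmi : m i = 0
  · simp [hmi]
  rcases Classical.em (∃ j : Fin 5, j ≠ 2 ∧ (m - Finsupp.single i 1 : Fin 5 →₀ ℕ) j ≠ 0) with ⟨j, hj, hmj⟩ | h
  · rw [hprod _ j hj hmj, mul_zero]
  push_neg at h
  have h' : ∀ j, j ≠ 2 → m j - (Finsupp.single i 1) j = 0 := by
    intro j hj
    have := h j hj
    rwa [Finsupp.tsub_apply] at this
  have hw := hsupp m hm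
  fin_cases i
  · exfalso
    have h0 := h' 0 (by decide); have h1 := h' 1 (by decide)
    have h3 := h' 3 (by decide); have h4 := h' 4 (by decide)
    simp [Finsupp.single_apply] at h0 h1 h3 h4
    simp only [Fin.isValue] at hmi hw
    omega
  · have h0 := h' 0 (by decide); have h1 := h' 1 (by decide)
    have h3 := h' 3 (by decide); have h4 := h' 4 (by decide)
    simp [Finsupp.single_apply] at h0 h1 h3 h4
    simp only [Fin.isValue] at hmi hw
    have hm1 : m 1 = 1 := by omega
    have hm2 : m 2 = 7 := by omega
    have hmeq : m = Finsupp.single (1 : Fin 5) 1 + Finsupp.single (2 : Fin 5) 7 := by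
      ext j
      fin_cases j <;> simp [Finsupp.single_apply, h0, hm1, hm2, h3, h4]
    rw [hmeq, hc]
    simp
  · exfalso
    have h0 := h' 0 (by decide); have h1 := h' 1 (by decide)
    have h3 := h' 3 (by decide); have h4 := h' 4 (by decide)
    simp [Finsupp.single_apply] at h0 h1 h3 h4
    simp only [Fin.isValue] at hmi hw
    omega
  · exfalso
    have h0 := h' 0 (by decide); have h1 := h' 1 (by decide)
    have h3 := h' 3 (by decide); have h4 := h' 4 (by decide)
    simp [Finsupp.single_apply] at h0 h1 h3 h4
    simp only [Fin.isValue] at hmi hw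
    omega
  · exfalso
    have h0 := h' 0 (by decide); have h1 := h' 1 (by decide)
    have h3 := h' 3 (by decide); have h4 := h' 4 (by decide)
    simp [Finsupp.single_apply] at h0 h1 h3 h4
    simp only [Fin.isValue] at hmi hw
    omega
end
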